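/- With λ = (−1+√−7)/2, μ = λ/λ̄, H = [[3, λ̄, λ̄],[λ, 3, λ̄],[λ, λ, 3]], and W = [[λ, 1, 0],[0, λ, 1],[μ, 0, λ]], one has H = W·W*, where * denotes conjugate transpose. -/

import Mathlib

/-! The only input is `λ λ̄ = 2`: it makes the diagonal entries `|λ|² + 1` and `|μ|² + |λ|²` equal
to `3` (as `|μ| = 1`), and gives `μ λ̄ = λ` for the corner entries. -/

open Matrix in
theorem mul_conjTranspose_eq_of_mul_star_eq_two {K : Type*} [Field K] [StarRing K]
    [NeZero (2 : K)] {lam : K} (h : lam * star lam = 2) :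
    !![lam, 1, 0; 0, lam, 1; lam / star lam, 0, lam] *
        (!![lam, 1, 0; 0, lam, 1; lam / star lam, 0, lam])ᴴ =
      !![3, star lam, star lam; lam, 3, star lam; lam, lam, 3] := by
  have hlam : lam ≠ 0 := left_ne_zero_of_mul (h ▸ two_ne_zero)
  have hstar : star lam ≠ 0 := star_ne_zero.mpr hlam
  ext i j
  fin_cases i <;> fin_cases j <;>
    simp only [Fin.zero_eta, Fin.mk_one, Fin.reduceFinMk, Fin.isValue, mul_apply, of_apply, cons_val',
      cons_val_fin_one, cons_val, cons_val_zero, cons_val_one, conjTranspose_apply,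
      Fin.sum_univ_three, star_div₀, star_star, star_one, star_zero, mul_one, one_mul, mul_zero,
      zero_mul, add_zero, zero_add] <;>
    field_simp <;>
    linear_combination h

theorem Complex.conj_neg_one_add_I_mul_sqrt_seven_div_two :
    starRingEnd ℂ ((-1 + I * Real.sqrt 7) / 2) = (-1 - I * Real.sqrt 7) / 2 := by
  simp only [map_div₀, map_add, map_neg, map_one, map_mul, conj_I, conj_ofReal, map_ofNat]
  ring

theorem Complex.neg_one_add_I_mul_sqrt_seven_div_two_mul_conj :
    (-1 + I * Real.sqrt 7) / 2 * starRingEnd ℂ ((-1 + I * Real.sqrt 7) / 2) = 2 := by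
  rw [conj_neg_one_add_I_mul_sqrt_seven_div_two]
  have h7 : (Real.sqrt 7 : ℂ) ^ 2 = 7 := by norm_cast; simp
  linear_combination (-1 / 4 : ℂ) * I ^ 2 * h7 - 7 / 4 * I_sq

open Complex Matrix in
theorem H_eq_W_mul_Wstar
    (lam lamb μ : ℂ) (hlam : lam = (-1 + Complex.I * Real.sqrt 7) / 2)
    (hlamb : lamb = (-1 - Complex.I * Real.sqrt 7) / 2) (hμ : μ = lam / lamb)
    (H W : Matrix (Fin 3) (Fin 3) ℂ)
    (hH : H = !![3, lamb, lamb; lam, 3, lamb; lam, lam, 3])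
    (hW : W = !![lam, 1, 0; 0, lam, 1; μ, 0, lam]) :
    H = W * Wᴴ := by
  have hconj : star lam = lamb := by
    rw [hlam, hlamb]; exact conj_neg_one_add_I_mul_sqrt_seven_div_two
  have hnorm : lam * star lam = 2 := hlam ▸ neg_one_add_I_mul_sqrt_seven_div_two_mul_conj
  rw [hH, hW, hμ, ← hconj]
  exact (mul_conjTranspose_eq_of_mul_star_eq_two hnorm).symm
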